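/- Equational completeness of domain semirings for binary relations: for any {∘, +, 0, 1, D}-terms s and t over variables Σ, the equation s = t holds in every domain semiring (under every assignment of values to the variables) if and only if for every set X and every assignment of binary relations on X to the variables, the relational interpretations of s and t coincide. -/

import Mathlib

/-!
Soundness: binary relations under union, composition, the empty and identity relations and
relational domain form a domain semiring, and `rinterpD` is the interpretation in it.

Completeness goes through a normal form. In every domain semiring each term equals a finite sum of
terms `T.term` of pointed trees `T`: `T.term` composes the edge labels along the path from the root
to the point, and each subtree `U` hanging off that path by an `a`-edge contributes the test
`dom (a * U.term)` at its vertex. In the canonical relational model, whose vertices are the trees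
and whose `a`-edges lead from a tree to its `a`-subtrees, `T.term` relates `T` to its point.
Conversely, if `T'.term` relates `T` to its point there, then the witnesses form a homomorphism
from `T'` into `T`, and following it gives `T.term ≤ T'.term` in every domain semiring. So if `s`
is included in `t` in this single model, each summand of the normal form of `s` lies below a
summand of the normal form of `t`.
-/

inductive PreTree (α : Type) : Type
  | node : Bool → List (α × PreTree α) → PreTree α

namespace PreTree

variable {α : Type}

def mark : PreTree α → Bool
  | node b _ => b

def children : PreTree α → List (α × PreTree α)
  | node _ cs => cs

def le : PreTree α → PreTree α → Prop
  | node b₁ c₁, node b₂ c₂ =>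
      (b₂ = true → b₁ = true) ∧
      ∀ q, q ∈ c₂ → ∃ p, p ∈ c₁ ∧ p.1 = q.1 ∧ le p.2 q.2
termination_by _ t₂ => sizeOf t₂
decreasing_by
  have h := List.sizeOf_lt_of_mem ‹q ∈ c₂›
  obtain ⟨qa, qt⟩ := q
  simp at h ⊢
  omega

-- The reduced form of a tree: reduce all child subtrees, then for each
-- label keep only the `≤`-minimal attached subtrees.
open scoped Classical in
noncomputable def reduce : PreTree α → PreTree α
  | node b cs =>
      let cs' : List (α × PreTree α) := cs.attach.map fun p => (p.1.1, reduce p.1.2)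
      node b (cs'.filter fun q =>
        decide (∀ q' ∈ cs', q'.1 = q.1 → le q'.2 q.2 → le q.2 q'.2))
termination_by t => sizeOf t
decreasing_by
  have h := List.sizeOf_lt_of_mem p.2
  obtain ⟨⟨pa, pt⟩, hp⟩ := p
  simp at h ⊢
  omega

/-- A tree is reduced if it equals its reduced form. -/
def Reduced (T : PreTree α) : Prop := reduce T = T

/-- The number of marked (point) vertices of a tree. -/
def markCount : PreTree α → ℕ
  | node b cs => (cond b 1 0) + (cs.attach.map fun p => markCount p.1.2).sum
termination_by t => sizeOf t
decreasing_by
  have h := List.sizeOf_lt_of_mem p.2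
  obtain ⟨⟨pa, pt⟩, hp⟩ := p
  simp at h ⊢
  omega

/-- A pointed tree: exactly one vertex is marked as the point. -/
def Pointed (T : PreTree α) : Prop := markCount T = 1

/-- Remove all point marks. -/
def unmark : PreTree α → PreTree α
  | node _ cs => node false (cs.attach.map fun p => (p.1.1, unmark p.1.2))
termination_by t => sizeOf t
decreasing_by
  have h := List.sizeOf_lt_of_mem p.2
  obtain ⟨⟨pa, pt⟩, hp⟩ := p
  simp at h ⊢
  omega

/-- Graft the tree `S` onto the point of `T` (identifying the point of `T`
with the root of `S`); the marks of `S` determine the new point. -/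
def graft (S : PreTree α) : PreTree α → PreTree α
  | node b cs =>
      if b then node S.mark (cs ++ S.children)
      else node b (cs.attach.map fun p => (p.1.1, graft S p.1.2))
termination_by t => sizeOf t
decreasing_by
  have h := List.sizeOf_lt_of_mem p.2
  obtain ⟨⟨pa, pt⟩, hp⟩ := p
  simp at h ⊢
  omega

/-- Move the point of `T` to its root. -/
def pointAtRoot (T : PreTree α) : PreTree α := node true (unmark T).children

/-- Pointed tree concatenation `T ∘ S`. -/
noncomputable def concat (T S : PreTree α) : PreTree α := reduce (graft S T)

/-- The domain operation `D(T)` on pointed trees. -/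
noncomputable def domTree (T : PreTree α) : PreTree α := reduce (pointAtRoot T)

/-- The trivial pointed tree: one vertex, both root and point. -/
def trivialTree : PreTree α := node true []

/-- The two-vertex pointed tree with a single `a`-labelled edge, point at the child. -/
def arrow (a : α) : PreTree α := node false [(a, node true [])]


/-- Set-theoretic equality of trees (children lists regarded as sets). -/
def eqv : PreTree α → PreTree α → Prop
  | node b₁ c₁, node b₂ c₂ =>
      b₁ = b₂ ∧
      (∀ p, p ∈ c₁ → ∃ q, q ∈ c₂ ∧ p.1 = q.1 ∧ eqv p.2 q.2) ∧
      (∀ q, q ∈ c₂ → ∃ p : {x // x ∈ c₁}, p.1.1 = q.1 ∧ eqv p.1.2 q.2)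
termination_by t₁ _ => sizeOf t₁
decreasing_by
  · have h₁ := List.sizeOf_lt_of_mem ‹p ∈ c₁›
    obtain ⟨pa, pt⟩ := p
    simp at h₁ ⊢
    omega
  · have h₁ := List.sizeOf_lt_of_mem p.2
    obtain ⟨⟨pa, pt⟩, hp⟩ := p
    simp at h₁ ⊢
    omega


/-- The subtree of `T` at position `p` (a list of child indices), if it exists. -/
def subAt : List ℕ → PreTree α → Option (PreTree α)
  | [], t => some t
  | i :: is, node _ cs => (cs[i]?).bind fun p => subAt is p.2

/-- `p` is a vertex of `T`. -/
def IsVertex (T : PreTree α) (p : List ℕ) : Prop := ∃ t, subAt p T = some t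

/-- The vertex `p` of `T` is the point (is marked). -/
def IsPoint (T : PreTree α) (p : List ℕ) : Prop :=
  ∃ t, subAt p T = some t ∧ t.mark = true

/-- There is an `a`-labelled edge of `T` from vertex `p` (the parent) to
vertex `q` (the child). -/
def Edge (T : PreTree α) (a : α) (p q : List ℕ) : Prop :=
  ∃ c, subAt p T = some c ∧ ∃ i t, c.children[i]? = some (a, t) ∧ q = p ++ [i]

theorem root_isVertex (T : PreTree α) : IsVertex T [] := ⟨T, rfl⟩

/-- A homomorphism of pointed labelled rooted trees from `S` to `T`:
a map of vertices preserving the labelled edge relations, sending the root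
to the root and points to points. -/
def HomTree (S T : PreTree α) : Prop :=
  ∃ θ : List ℕ → List ℕ,
    θ [] = [] ∧
    (∀ p, IsVertex S p → IsVertex T (θ p)) ∧
    (∀ a p q, Edge S a p q → Edge T a (θ p) (θ q)) ∧
    (∀ p, IsPoint S p → IsPoint T (θ p))

/-- A homomorphism of the pointed tree `T`, viewed as a relational structure,
into the relational structure `(X, f)`, mapping the root of `T` to `x` and
the point of `T` to `y`. -/
def HomInto {X : Type} (T : PreTree α) (f : α → X → X → Prop) (x y : X) : Prop :=
  ∃ θ : List ℕ → X,
    θ [] = x ∧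
    (∀ a p q, Edge T a p q → f a (θ p) (θ q)) ∧
    (∀ p, IsPoint T p → θ p = y)


end PreTree

namespace FreeKAD

/-- Terms of the signature `{∘, 1, D}`. -/
inductive Term1 (α : Type) : Type
  | var : α → Term1 α
  | one : Term1 α
  | comp : Term1 α → Term1 α → Term1 α
  | dom : Term1 α → Term1 α

/-- Terms of the signature `{∘, +, *, 0, 1, D}` (Kleene algebra with domain). -/
inductive TermK (α : Type) : Type
  | var : α → TermK α
  | zero : TermK α
  | one : TermK α
  | comp : TermK α → TermK α → TermK α
  | add : TermK α → TermK α → TermK α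
  | star : TermK α → TermK α
  | dom : TermK α → TermK α

variable {α : Type}

/-- The relational interpretation of a `{∘, 1, D}`-term over a set `X`,
under an assignment `f` of binary relations on `X` to the variables. -/
def rinterp1 {X : Type} (f : α → X → X → Prop) : Term1 α → X → X → Prop
  | .var a => f a
  | .one => fun x y => x = y
  | .comp s t => fun x y => ∃ z, rinterp1 f s x z ∧ rinterp1 f t z y
  | .dom s => fun x y => x = y ∧ ∃ z, rinterp1 f s x z

/-- The relational interpretation of a `{∘, +, *, 0, 1, D}`-term over a set `X`,
under an assignment `f` of binary relations on `X` to the variables. -/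
def rinterpK {X : Type} (f : α → X → X → Prop) : TermK α → X → X → Prop
  | .var a => f a
  | .zero => fun _ _ => False
  | .one => fun x y => x = y
  | .comp s t => fun x y => ∃ z, rinterpK f s x z ∧ rinterpK f t z y
  | .add s t => fun x y => rinterpK f s x y ∨ rinterpK f t x y
  | .star s => Relation.ReflTransGen (rinterpK f s)
  | .dom s => fun x y => x = y ∧ ∃ z, rinterpK f s x z

/-- Composition of binary relations. -/
def relComp {X : Type} (R S : X → X → Prop) : X → X → Prop :=
  fun x y => ∃ z, R x z ∧ S z y

/-- Union of binary relations. -/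
def relUnion {X : Type} (R S : X → X → Prop) : X → X → Prop :=
  fun x y => R x y ∨ S x y

/-- The domain operation on binary relations. -/
def relDom {X : Type} (R : X → X → Prop) : X → X → Prop :=
  fun x y => x = y ∧ ∃ z, R x z

/-- The identity relation. -/
def relId {X : Type} : X → X → Prop := fun x y => x = y

/-- The empty relation. -/
def relEmpty {X : Type} : X → X → Prop := fun _ _ => False

end FreeKAD

namespace FreeKAD

open PreTree

variable {α : Type}

/-- The single-tree interpretation of `{∘, 1, D}`-terms. -/
noncomputable def interp1 : Term1 α → PreTree α
  | .var a => arrow a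
  | .one => trivialTree
  | .comp s t => concat (interp1 s) (interp1 t)
  | .dom s => domTree (interp1 s)

/-- The set of `≤`-maximal elements of a set of trees. -/
def maximalSet (K : Set (PreTree α)) : Set (PreTree α) :=
  {T | T ∈ K ∧ ∀ S ∈ K, le T S → le S T}

/-- Elementwise lifting of pointed tree concatenation to sets of trees. -/
def liftComp (K L : Set (PreTree α)) : Set (PreTree α) :=
  {U | ∃ T ∈ K, ∃ S ∈ L, U = concat T S}

/-- Elementwise lifting of the domain operation to sets of trees. -/
def liftDom (K : Set (PreTree α)) : Set (PreTree α) :=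
  {U | ∃ T ∈ K, U = domTree T}

/-- Iterated lifted concatenation: `K^0 = {trivial}`, `K^(i+1) = K^i ∘ K`. -/
def powC (K : Set (PreTree α)) : ℕ → Set (PreTree α)
  | 0 => {trivialTree}
  | i + 1 => liftComp (powC K i) K

/-- The standard tree interpretation of `{∘, +, *, 0, 1, D}`-terms. -/
def sinterp : TermK α → Set (PreTree α)
  | .var a => {arrow a}
  | .zero => ∅
  | .one => {trivialTree}
  | .comp s t => maximalSet (liftComp (sinterp s) (sinterp t))
  | .add s t => maximalSet (sinterp s ∪ sinterp t)
  | .star s => maximalSet (⋃ i : ℕ, powC (sinterp s) (i + 1))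
  | .dom s => maximalSet (liftDom (sinterp s))

/-- Equality of sets of trees, with trees compared as (hereditarily finite) sets. -/
def SetEqv (K L : Set (PreTree α)) : Prop :=
  (∀ T ∈ K, ∃ S ∈ L, eqv T S) ∧ (∀ S ∈ L, ∃ T ∈ K, eqv T S)

/-- A set of reduced pointed trees is regular if it is the standard tree
interpretation of some `{∘, +, *, 0, 1, D}`-term. -/
def Regular (L : Set (PreTree α)) : Prop := ∃ t : TermK α, L = sinterp t

/-- The set of reduced trees lying `≤`-below some member of `L`. -/
def down (L : Set (PreTree α)) : Set (PreTree α) :=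
  {T | Reduced T ∧ ∃ S ∈ L, le T S}

end FreeKAD

namespace FreeKAD

/-- Terms of the signature `{∘, +, 0, 1, D}`. -/
inductive TermD (α : Type) : Type
  | var : α → TermD α
  | zero : TermD α
  | one : TermD α
  | comp : TermD α → TermD α → TermD α
  | add : TermD α → TermD α → TermD α
  | dom : TermD α → TermD α

/-- The operations of a domain semiring on a carrier `S`. -/
structure DSOps (S : Type) : Type where
  add : S → S → S
  mul : S → S → S
  zero : S
  one : S
  dom : S → S

/-- `o` makes `S` into a domain semiring: an idempotent semiring together
with a domain operation `d` satisfying `d(x)·x = x`,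
`d(x·y) = d(x·d(y))`, `d(x) + 1 = 1`, `d(0) = 0` and
`d(x + y) = d(x) + d(y)`. -/
def IsDomainSemiring {S : Type} (o : DSOps S) : Prop :=
  (∀ x y z, o.add (o.add x y) z = o.add x (o.add y z)) ∧
  (∀ x y, o.add x y = o.add y x) ∧
  (∀ x, o.add x x = x) ∧
  (∀ x, o.add o.zero x = x) ∧
  (∀ x y z, o.mul (o.mul x y) z = o.mul x (o.mul y z)) ∧
  (∀ x, o.mul o.one x = x) ∧
  (∀ x, o.mul x o.one = x) ∧
  (∀ x y z, o.mul x (o.add y z) = o.add (o.mul x y) (o.mul x z)) ∧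
  (∀ x y z, o.mul (o.add x y) z = o.add (o.mul x z) (o.mul y z)) ∧
  (∀ x, o.mul o.zero x = o.zero) ∧
  (∀ x, o.mul x o.zero = o.zero) ∧
  (∀ x, o.mul (o.dom x) x = x) ∧
  (∀ x y, o.dom (o.mul x y) = o.dom (o.mul x (o.dom y))) ∧
  (∀ x, o.add (o.dom x) o.one = o.one) ∧
  (o.dom o.zero = o.zero) ∧
  (∀ x y, o.dom (o.add x y) = o.add (o.dom x) (o.dom y))

variable {α : Type}

/-- Interpretation of a `{∘, +, 0, 1, D}`-term in a domain semiring under an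
assignment `v` of values to the variables. -/
def dsinterp {S : Type} (o : DSOps S) (v : α → S) : TermD α → S
  | .var a => v a
  | .zero => o.zero
  | .one => o.one
  | .comp s t => o.mul (dsinterp o v s) (dsinterp o v t)
  | .add s t => o.add (dsinterp o v s) (dsinterp o v t)
  | .dom s => o.dom (dsinterp o v s)

/-- Relational interpretation of a `{∘, +, 0, 1, D}`-term. -/
def rinterpD {X : Type} (f : α → X → X → Prop) : TermD α → X → X → Prop
  | .var a => f a
  | .zero => fun _ _ => False
  | .one => fun x y => x = y
  | .comp s t => fun x y => ∃ z, rinterpD f s x z ∧ rinterpD f t z y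
  | .add s t => fun x y => rinterpD f s x y ∨ rinterpD f t x y
  | .dom s => fun x y => x = y ∧ ∃ z, rinterpD f s x z

class DomainSemiring (S : Type*) extends IdemSemiring S where
  dom : S → S
  dom_mul_self (x : S) : dom x * x = x
  dom_mul_dom (x y : S) : dom (x * y) = dom (x * dom y)
  dom_add_one (x : S) : dom x + 1 = 1
  dom_zero : dom 0 = 0
  dom_add (x y : S) : dom (x + y) = dom x + dom y

namespace IsDomainSemiring

variable {S : Type} {o : DSOps S}

abbrev toSemiring (h : IsDomainSemiring o) : Semiring S where
  add := o.add
  mul := o.mul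
  zero := o.zero
  one := o.one
  nsmul := @nsmulRec S ⟨o.zero⟩ ⟨o.add⟩
  add_assoc := h.1
  add_comm := h.2.1
  zero_add := h.2.2.2.1
  add_zero x := (h.2.1 x o.zero).trans (h.2.2.2.1 x)
  mul_assoc := h.2.2.2.2.1
  one_mul := h.2.2.2.2.2.1
  mul_one := h.2.2.2.2.2.2.1
  left_distrib := h.2.2.2.2.2.2.2.1
  right_distrib := h.2.2.2.2.2.2.2.2.1
  zero_mul := h.2.2.2.2.2.2.2.2.2.1
  mul_zero := h.2.2.2.2.2.2.2.2.2.2.1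

abbrev toDomainSemiring (h : IsDomainSemiring o) : DomainSemiring S :=
  letI := h.toSemiring
  { IdemSemiring.ofSemiring h.2.2.1 with
    dom := o.dom
    dom_mul_self := h.2.2.2.2.2.2.2.2.2.2.2.1
    dom_mul_dom := h.2.2.2.2.2.2.2.2.2.2.2.2.1
    dom_add_one := h.2.2.2.2.2.2.2.2.2.2.2.2.2.1
    dom_zero := h.2.2.2.2.2.2.2.2.2.2.2.2.2.2.1
    dom_add := h.2.2.2.2.2.2.2.2.2.2.2.2.2.2.2 }

end IsDomainSemiring

def TermD.eval {S : Type*} [DomainSemiring S] (v : α → S) : TermD α → S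
  | .var a => v a
  | .zero => 0
  | .one => 1
  | .comp s t => eval v s * eval v t
  | .add s t => eval v s + eval v t
  | .dom s => DomainSemiring.dom (eval v s)

theorem IsDomainSemiring.dsinterp_eq_eval {S : Type} {o : DSOps S} (h : IsDomainSemiring o)
    (v : α → S) (u : TermD α) : dsinterp o v u = @TermD.eval _ _ h.toDomainSemiring v u := by
  induction u with
  | var | zero | one => rfl
  | comp s t ihs iht | add s t ihs iht => rw [dsinterp, ihs, iht]; rfl
  | dom s ih => rw [dsinterp, ih]; rfl

namespace DomainSemiring

variable {S : Type*} [DomainSemiring S] {x y p q r : S}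

theorem dom_le_one (x : S) : dom x ≤ 1 :=
  add_eq_right_iff_le.1 (dom_add_one x)

theorem dom_mono : Monotone (dom : S → S) := fun x y hxy =>
  add_eq_right_iff_le.1 (by rw [← dom_add, add_eq_right_iff_le.2 hxy])

theorem dom_dom (x : S) : dom (dom x) = dom x := by
  simpa only [one_mul] using (dom_mul_dom 1 x).symm

theorem dom_mul_le_dom_left (x y : S) : dom (x * y) ≤ dom x := by
  rw [dom_mul_dom]
  simpa only [mul_one] using dom_mono (mul_le_mul' le_rfl (dom_le_one y))

theorem dom_mul_le_dom_right (hp : p ≤ 1) (x : S) : dom (p * x) ≤ dom x :=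
  dom_mono (mul_le_of_le_one_left' hp)

theorem le_dom_of_le_one (hx : x ≤ 1) : x ≤ dom x :=
  calc x = dom x * x := (dom_mul_self x).symm
    _ ≤ dom x := mul_le_of_le_one_right' hx

theorem dom_list_sum (l : List S) : dom l.sum = (l.map dom).sum := by
  induction l with
  | nil => exact dom_zero
  | cons x l ih => rw [List.sum_cons, dom_add, ih, List.map_cons, List.sum_cons]

def IsTest (p : S) : Prop := dom p = p

theorem isTest_dom (x : S) : IsTest (dom x) := dom_dom x

theorem isTest_one : IsTest (1 : S) := by
  have h := dom_mul_self (1 : S)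
  rwa [mul_one] at h

theorem IsTest.le_one (hp : IsTest p) : p ≤ 1 := hp ▸ dom_le_one p

theorem IsTest.mul_self (hp : IsTest p) : p * p = p := by
  have h := dom_mul_self p
  rwa [hp] at h

theorem IsTest.le_mul (hr : IsTest r) (hp : r ≤ p) (hq : r ≤ q) : r ≤ p * q :=
  hr.mul_self ▸ mul_le_mul' hp hq

theorem IsTest.dom_mul (hp : IsTest p) (x : S) : dom (p * x) = p * dom x := by
  apply le_antisymm
  · refine (isTest_dom _).le_mul ?_ (dom_mul_le_dom_right hp.le_one x)
    exact (dom_mul_le_dom_left p x).trans hp.le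
  · calc p * dom x ≤ dom (p * dom x) :=
          le_dom_of_le_one (mul_le_one' hp.le_one (dom_le_one x))
      _ = dom (p * x) := (dom_mul_dom p x).symm

theorem IsTest.mul (hp : IsTest p) (hq : IsTest q) : IsTest (p * q) := by
  rw [IsTest, hp.dom_mul, hq]

theorem isTest_list_prod {l : List S} (hl : ∀ p ∈ l, IsTest p) : IsTest l.prod := by
  induction l with
  | nil => exact isTest_one
  | cons p l ih =>
    rw [List.prod_cons]
    exact (hl p List.mem_cons_self).mul (ih fun q hq => hl q (List.mem_cons_of_mem p hq))

theorem list_prod_le_of_mem {l : List S} (hl : ∀ q ∈ l, IsTest q) (hp : p ∈ l) :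
    l.prod ≤ p := by
  induction l with
  | nil => exact absurd hp List.not_mem_nil
  | cons q l ih =>
    have hl' : ∀ q' ∈ l, IsTest q' := fun q' hq' => hl q' (List.mem_cons_of_mem q hq')
    rw [List.prod_cons]
    rcases List.mem_cons.1 hp with rfl | hp
    · exact mul_le_of_le_one_right' (isTest_list_prod hl').le_one
    · exact (mul_le_of_le_one_left' (hl q List.mem_cons_self).le_one).trans (ih hl' hp)

theorem IsTest.le_list_prod (hr : IsTest r) {l : List S} (hl : ∀ p ∈ l, r ≤ p) :
    r ≤ l.prod := by
  induction l with
  | nil => exact hr.le_one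
  | cons p l ih =>
    rw [List.prod_cons]
    exact hr.le_mul (hl p List.mem_cons_self) (ih fun q hq => hl q (List.mem_cons_of_mem p hq))

end DomainSemiring

theorem list_sum_le_of_forall_le {S : Type*} [IdemSemiring S] {l : List S} {c : S}
    (h : ∀ x ∈ l, x ≤ c) : l.sum ≤ c := by
  induction l with
  | nil => exact zero_le
  | cons x l ih =>
    rw [List.sum_cons]
    exact add_le (h x List.mem_cons_self) (ih fun y hy => h y (List.mem_cons_of_mem x hy))

inductive UTree (α : Type) : Type
  | node : List (α × UTree α) → UTree α

/-- A pointed tree, given by the path from its root to its point: `step cs a P` is a root with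
side subtrees `cs` and an `a`-edge to the rest `P` of the path. -/
inductive PTree (α : Type) : Type
  | point : List (α × UTree α) → PTree α
  | step : List (α × UTree α) → α → PTree α → PTree α

def UTree.children : UTree α → List (α × UTree α)
  | .node cs => cs

theorem UTree.sizeOf_lt_of_mem_children {U W : UTree α} {a : α} (h : (a, W) ∈ U.children) :
    sizeOf W < sizeOf U := by
  cases U with
  | node cs =>
    have := List.sizeOf_lt_of_mem (show (a, W) ∈ cs from h)
    simp only [Prod.mk.sizeOf_spec, UTree.node.sizeOf_spec] at this ⊢
    omega

mutual

def UTree.term : UTree α → TermD α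
  | .node cs => sidesTerm cs

def sidesTerm : List (α × UTree α) → TermD α
  | [] => .one
  | p :: cs => .comp (.dom (.comp (.var p.1) p.2.term)) (sidesTerm cs)

end

theorem UTree.term_eq_sidesTerm (U : UTree α) : U.term = sidesTerm U.children := by
  cases U; rfl

namespace PTree

def term : PTree α → TermD α
  | point cs => sidesTerm cs
  | step cs a P => .comp (sidesTerm cs) (.comp (.var a) P.term)

def addSides (cs : List (α × UTree α)) : PTree α → PTree α
  | point cs' => point (cs ++ cs')
  | step cs' a P => step (cs ++ cs') a P

def graft : PTree α → PTree α → PTree α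
  | point cs, T => T.addSides cs
  | step cs a P, T => step cs a (P.graft T)

def toUTree : PTree α → UTree α
  | point cs => .node cs
  | step cs a P => .node (cs ++ [(a, P.toUTree)])

def pointAtRoot (T : PTree α) : PTree α := point T.toUTree.children

end PTree

def TermD.normalForm : TermD α → List (PTree α)
  | .var a => [.step [] a (.point [])]
  | .zero => []
  | .one => [.point []]
  | .comp s t => s.normalForm.flatMap fun T => t.normalForm.map T.graft
  | .add s t => s.normalForm ++ t.normalForm
  | .dom s => s.normalForm.map PTree.pointAtRoot

section NormalForm

open DomainSemiring

variable {S : Type*} [DomainSemiring S] (v : α → S)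

theorem eval_sidesTerm (cs : List (α × UTree α)) :
    (sidesTerm cs).eval v = (cs.map fun p => dom (v p.1 * p.2.term.eval v)).prod := by
  induction cs with
  | nil => rfl
  | cons p cs ih => rw [List.map_cons, List.prod_cons, ← ih]; rfl

theorem isTest_eval_sidesTerm (cs : List (α × UTree α)) : IsTest ((sidesTerm cs).eval v) := by
  rw [eval_sidesTerm]
  exact isTest_list_prod (List.forall_mem_map.2 fun _ _ => isTest_dom _)

theorem eval_sidesTerm_le_of_mem {cs : List (α × UTree α)} {a : α} {U : UTree α}
    (h : (a, U) ∈ cs) : (sidesTerm cs).eval v ≤ dom (v a * U.term.eval v) := by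
  rw [eval_sidesTerm]
  exact list_prod_le_of_mem (List.forall_mem_map.2 fun _ _ => isTest_dom _)
    (List.mem_map_of_mem (f := fun p => dom (v p.1 * p.2.term.eval v)) h)

theorem eval_sidesTerm_append (cs cs' : List (α × UTree α)) :
    (sidesTerm (cs ++ cs')).eval v = (sidesTerm cs).eval v * (sidesTerm cs').eval v := by
  simp only [eval_sidesTerm, List.map_append, List.prod_append]

theorem PTree.eval_addSides (cs : List (α × UTree α)) (T : PTree α) :
    (T.addSides cs).term.eval v = (sidesTerm cs).eval v * T.term.eval v := by
  cases T with
  | point cs' => exact eval_sidesTerm_append v cs cs'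
  | step cs' a P =>
    simp only [addSides, term, TermD.eval, eval_sidesTerm_append, mul_assoc]

theorem PTree.eval_graft (T T' : PTree α) :
    (T.graft T').term.eval v = T.term.eval v * T'.term.eval v := by
  induction T with
  | point cs => exact eval_addSides v cs T'
  | step cs a P ih => simp only [graft, term, TermD.eval, ih, mul_assoc]

theorem PTree.dom_eval_term (T : PTree α) : dom (T.term.eval v) = T.toUTree.term.eval v := by
  cases T with
  | point cs => exact isTest_eval_sidesTerm v cs
  | step cs a P =>
    calc dom ((sidesTerm cs).eval v * (v a * P.term.eval v))
        = (sidesTerm cs).eval v * dom (v a * dom (P.term.eval v)) := by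
          rw [(isTest_eval_sidesTerm v cs).dom_mul, dom_mul_dom]
      _ = (sidesTerm (cs ++ [(a, P.toUTree)])).eval v := by
          rw [P.dom_eval_term, eval_sidesTerm_append, eval_sidesTerm (cs := [_])]
          simp

theorem PTree.eval_pointAtRoot (T : PTree α) :
    T.pointAtRoot.term.eval v = dom (T.term.eval v) := by
  rw [dom_eval_term, UTree.term_eq_sidesTerm]
  rfl

theorem TermD.eval_eq_sum_normalForm (u : TermD α) :
    u.eval v = (u.normalForm.map fun T => T.term.eval v).sum := by
  induction u with
  | var a => simp [normalForm, PTree.term, TermD.eval, sidesTerm]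
  | zero => rfl
  | one => simp [normalForm, PTree.term, TermD.eval, sidesTerm]
  | comp s t ihs iht =>
    simp only [TermD.eval, normalForm, ihs, iht, List.flatMap_def, List.map_flatten,
      List.sum_flatten, List.map_map, Function.comp_def, PTree.eval_graft, List.sum_map_mul_left,
      List.sum_map_mul_right]
  | add s t ihs iht =>
    simp only [TermD.eval, normalForm, ihs, iht, List.map_append, List.sum_append]
  | dom s ih =>
    simp only [TermD.eval, normalForm, ih, dom_list_sum, List.map_map, Function.comp_def,
      PTree.eval_pointAtRoot]

end NormalForm

section Relations

variable {X : Type}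

def relOps (X : Type) : DSOps (X → X → Prop) := ⟨relUnion, relComp, relEmpty, relId, relDom⟩

theorem isDomainSemiring_relOps (X : Type) : IsDomainSemiring (relOps X) := by
  refine ⟨?_, ?_, ?_, ?_, ?_, ?_, ?_, ?_, ?_, ?_, ?_, ?_, ?_, ?_, ?_, ?_⟩ <;>
  · intros
    funext x y
    simp only [relOps, relUnion, relComp, relDom, relId, relEmpty, eq_iff_iff]
    aesop

theorem rinterpD_eq_dsinterp (f : α → X → X → Prop) (u : TermD α) :
    rinterpD f u = dsinterp (relOps X) f u := by
  induction u with
  | var | zero | one => rfl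
  | comp s t ihs iht | add s t ihs iht => rw [rinterpD, dsinterp, ← ihs, ← iht]; rfl
  | dom s ih => rw [rinterpD, dsinterp, ← ih]; rfl

theorem rinterpD_iff_exists_normalForm (f : α → X → X → Prop) (u : TermD α) (x y : X) :
    rinterpD f u x y ↔ ∃ T ∈ u.normalForm, rinterpD f T.term x y := by
  let _ := (isDomainSemiring_relOps X).toDomainSemiring
  have h_eval (u : TermD α) : rinterpD f u = u.eval f :=
    (rinterpD_eq_dsinterp f u).trans ((isDomainSemiring_relOps X).dsinterp_eq_eval f u)
  have h_sum (l : List (X → X → Prop)) : l.sum x y ↔ ∃ R ∈ l, R x y := by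
    induction l with
    | nil => exact ⟨False.elim, fun ⟨_, h, _⟩ => absurd h List.not_mem_nil⟩
    | cons R l ih =>
      simp only [List.sum_cons, List.mem_cons, or_and_right, exists_or, exists_eq_left, ← ih]
      rfl
  simp [h_eval, TermD.eval_eq_sum_normalForm f u, h_sum]

theorem rinterpD_sidesTerm_iff (f : α → X → X → Prop) (cs : List (α × UTree α))
    (x y : X) :
    rinterpD f (sidesTerm cs) x y ↔
      x = y ∧ ∀ p ∈ cs, ∃ m, f p.1 x m ∧ ∃ z, rinterpD f p.2.term m z := by
  induction cs generalizing x with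
  | nil => simp [sidesTerm, rinterpD]
  | cons p cs ih =>
    simp only [sidesTerm, rinterpD, ih, List.forall_mem_cons]
    aesop

end Relations

/-- The vertices of the canonical model: every tree stands for its own root. -/
abbrev Node (α : Type) : Type := UTree α ⊕ PTree α

def Node.sides : Node α → List (α × UTree α)
  | .inl U => U.children
  | .inr (.point cs) | .inr (.step cs _ _) => cs

def Node.term : Node α → TermD α := Sum.elim UTree.term PTree.term

inductive Edge : α → Node α → Node α → Prop
  | side {a : α} {U : UTree α} {x : Node α} : (a, U) ∈ x.sides → Edge a x (.inl U)
  | spine {cs : List (α × UTree α)} {a : α} {P : PTree α} :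
      Edge a (.inr (.step cs a P)) (.inr P)

def PTree.pointNode : PTree α → Node α
  | point cs => .inr (point cs)
  | step _ _ P => P.pointNode

theorem PTree.exists_pointNode_eq (T : PTree α) : ∃ cs, T.pointNode = .inr (point cs) := by
  induction T with
  | point cs => exact ⟨cs, rfl⟩
  | step _ _ P ih => exact ih

theorem rinterpD_edge_isLeft {u : TermD α} {U : UTree α} {y : Node α}
    (h : rinterpD Edge u (.inl U) y) : y.isLeft := by
  induction u generalizing U y with
  | var a => cases h; rfl
  | zero => exact h.elim
  | one => cases h; rfl
  | comp s t ihs iht =>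
    obtain ⟨z, hs, ht⟩ := h
    obtain ⟨W, rfl⟩ := Sum.isLeft_iff.1 (ihs hs)
    exact iht ht
  | add s t ihs iht => exact h.elim ihs iht
  | dom s ih => rw [← h.1]; rfl

theorem UTree.rinterpD_edge_term : ∀ U : UTree α, rinterpD Edge U.term (.inl U) (.inl U)
  | .node cs => (rinterpD_sidesTerm_iff Edge cs _ _).2
      ⟨rfl, fun p hp => ⟨.inl p.2, .side hp, .inl p.2, rinterpD_edge_term p.2⟩⟩
termination_by U => sizeOf U
decreasing_by exact sizeOf_lt_of_mem_children (U := .node cs) hp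

theorem rinterpD_edge_sidesTerm_sides (x : Node α) : rinterpD Edge (sidesTerm x.sides) x x :=
  (rinterpD_sidesTerm_iff Edge _ x x).2
    ⟨rfl, fun p hp => ⟨.inl p.2, .side hp, .inl p.2, p.2.rinterpD_edge_term⟩⟩

theorem PTree.rinterpD_edge_term (T : PTree α) : rinterpD Edge T.term (.inr T) T.pointNode := by
  induction T with
  | point cs => exact rinterpD_edge_sidesTerm_sides (.inr (point cs))
  | step cs a P ih =>
    exact ⟨_, rinterpD_edge_sidesTerm_sides (.inr (step cs a P)), .inr P, .spine, ih⟩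

section Homomorphism

open DomainSemiring

variable {S : Type*} [DomainSemiring S] (v : α → S)

theorem Node.dom_eval_term_le_sidesTerm (x : Node α) :
    dom (x.term.eval v) ≤ (sidesTerm x.sides).eval v := by
  rcases x with U | (cs | ⟨cs, a, P⟩)
  · rw [Node.term, Sum.elim_inl, UTree.term_eq_sidesTerm]
    exact (isTest_eval_sidesTerm v _).le
  · exact (isTest_eval_sidesTerm v cs).le
  · exact (dom_mul_le_dom_left _ _).trans (isTest_eval_sidesTerm v cs).le

theorem dom_eval_term_le_of_edge {a : α} {x y : Node α} (h : Edge a x y) :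
    dom (x.term.eval v) ≤ dom (v a * dom (y.term.eval v)) := by
  rw [← dom_mul_dom]
  cases h with
  | side hU => exact (x.dom_eval_term_le_sidesTerm v).trans (eval_sidesTerm_le_of_mem v hU)
  | spine => exact dom_mul_le_dom_right (isTest_eval_sidesTerm v _).le_one _

theorem UTree.dom_eval_term_le_of_rinterpD : ∀ (U : UTree α) {x y : Node α},
    rinterpD Edge U.term x y → dom (x.term.eval v) ≤ U.term.eval v
  | .node cs, x, y, h => by
    obtain ⟨rfl, hcs⟩ := (rinterpD_sidesTerm_iff Edge cs x y).1 h
    rw [UTree.term, eval_sidesTerm]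
    refine (isTest_dom _).le_list_prod fun q hq => ?_
    obtain ⟨p, hp, rfl⟩ := List.mem_map.1 hq
    obtain ⟨m, hxm, z, hmz⟩ := hcs p hp
    calc dom (x.term.eval v) ≤ dom (v p.1 * dom (m.term.eval v)) :=
          dom_eval_term_le_of_edge v hxm
      _ ≤ dom (v p.1 * p.2.term.eval v) :=
        dom_mono (mul_le_mul' le_rfl (dom_eval_term_le_of_rinterpD p.2 hmz))
termination_by U => sizeOf U
decreasing_by exact sizeOf_lt_of_mem_children (U := .node cs) hp

theorem PTree.eval_term_le_of_rinterpD : ∀ (T' T : PTree α),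
    rinterpD Edge T'.term (.inr T) T.pointNode → T.term.eval v ≤ T'.term.eval v
  | .point cs', T, h => by
    obtain ⟨ds, hds⟩ := T.exists_pointNode_eq
    rw [hds] at h
    obtain ⟨⟨⟩, -⟩ := (rinterpD_sidesTerm_iff Edge cs' _ _).1 h
    calc (point ds).term.eval v = dom ((point ds).term.eval v) :=
          (isTest_eval_sidesTerm v ds).symm
      _ ≤ _ := (UTree.node cs').dom_eval_term_le_of_rinterpD v h
  | .step cs' a P', T, ⟨_, hside, z, hedge, hP'⟩ => by
    obtain ⟨rfl, -⟩ := (rinterpD_sidesTerm_iff Edge cs' _ _).1 hside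
    have hdom := (UTree.node cs').dom_eval_term_le_of_rinterpD v hside
    cases hedge with
    | side _ =>
      obtain ⟨ds, hds⟩ := T.exists_pointNode_eq
      have := rinterpD_edge_isLeft hP'
      simp [hds] at this
    | @spine cs _ P =>
      have hP := eval_term_le_of_rinterpD P' P hP'
      calc (step cs a P).term.eval v
          = dom ((step cs a P).term.eval v) * (step cs a P).term.eval v := (dom_mul_self _).symm
        _ ≤ (sidesTerm cs').eval v * (v a * P.term.eval v) :=
          mul_le_mul' hdom (mul_le_of_le_one_left' (isTest_eval_sidesTerm v cs).le_one)
        _ ≤ (sidesTerm cs').eval v * (v a * P'.term.eval v) :=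
          mul_le_mul' le_rfl (mul_le_mul' le_rfl hP)

end Homomorphism

theorem TermD.eval_le_eval_of_rinterpD_edge {s t : TermD α}
    (hst : ∀ x y, rinterpD Edge s x y → rinterpD Edge t x y)
    {S : Type*} [DomainSemiring S] (v : α → S) : s.eval v ≤ t.eval v := by
  rw [eval_eq_sum_normalForm v s]
  refine list_sum_le_of_forall_le fun _ hmem => ?_
  obtain ⟨T, hT, rfl⟩ := List.mem_map.1 hmem
  have hs : rinterpD Edge s (.inr T) T.pointNode :=
    (rinterpD_iff_exists_normalForm Edge s _ _).2 ⟨T, hT, T.rinterpD_edge_term⟩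
  obtain ⟨T', hT', ht⟩ := (rinterpD_iff_exists_normalForm Edge t _ _).1 (hst _ _ hs)
  calc T.term.eval v ≤ T'.term.eval v := T'.eval_term_le_of_rinterpD v T ht
    _ ≤ (t.normalForm.map fun T => T.term.eval v).sum :=
      List.le_sum_of_mem (List.mem_map_of_mem hT')
    _ = t.eval v := (eval_eq_sum_normalForm v t).symm

/-- Equational completeness of domain semirings for
binary relations: for `{∘, +, 0, 1, D}`-terms `s` and `t`, the equation
`s = t` holds in every domain semiring (under every assignment) iff for
every set `X` and every assignment of binary relations on `X` to the
variables, the relational interpretations of `s` and `t` coincide. -/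
theorem domain_semiring_equational_completeness {α : Type} (s t : TermD α) :
    (∀ (S : Type) (o : DSOps S), IsDomainSemiring o →
        ∀ v : α → S, dsinterp o v s = dsinterp o v t) ↔
    (∀ (X : Type) (f : α → X → X → Prop), rinterpD f s = rinterpD f t) := by
  constructor
  · intro h X f
    rw [rinterpD_eq_dsinterp, rinterpD_eq_dsinterp]
    exact h _ _ (isDomainSemiring_relOps X) f
  · intro h S o ho v
    let _ := ho.toDomainSemiring
    rw [ho.dsinterp_eq_eval, ho.dsinterp_eq_eval]
    exact le_antisymm (TermD.eval_le_eval_of_rinterpD_edge (fun _ _ => h _ Edge ▸ id) v)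
      (TermD.eval_le_eval_of_rinterpD_edge (fun _ _ => (h _ Edge).symm ▸ id) v)

end FreeKAD
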